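/- arXiv:2504.16205 — 6 statements merged into one kernel-verified Lean document; each statement's English description precedes it below -/
import Mathlib

section
/- Let m be a positive integer and let R, S, T ⊆ ZMod m satisfy R = −R, T = −T, 0 ∉ R ∪ T and 0 ∈ S. The bicirculant B(m;R,S,T) is connected if and only if the gcd of m together with the canonical integer representatives of all elements of R ∪ S ∪ T equals 1. -/
/-!
Since `0 ∈ S`, each `u_i` is adjacent to `v_i`, and every edge changes the index by an element
of `±(R ∪ S ∪ T)`. So the vertices reachable from `u_0` are exactly those whose index lies in the
subgroup `H` generated by `R ∪ S ∪ T`, and the graph is connected iff `H = ZMod m`. If `d` is the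
gcd, reduction mod `d` kills `H`, so `H = ZMod m` forces `d = 1`; conversely the integers that
land in `H` form a subgroup `aℤ` containing `m` and all representatives, so `a ∣ d = 1`.
-/

open SimpleGraph

/-- The bicirculant graph `B(m;R,S,T)` on vertex set `ZMod m ⊕ ZMod m`. -/
def bicirculant (m : ℕ) (R S T : Set (ZMod m)) : SimpleGraph (ZMod m ⊕ ZMod m) :=
  SimpleGraph.fromRel (fun x y =>
    match x, y with
    | Sum.inl i, Sum.inl i' => ∃ j ∈ R, i' = i + j
    | Sum.inr i, Sum.inr i' => ∃ j ∈ T, i' = i + j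
    | Sum.inl i, Sum.inr i' => ∃ j ∈ S, i' = i + j
    | Sum.inr _, Sum.inl _ => False)

/-- The gcd of `m` together with the canonical integer representatives of
all elements of a subset `X` of `ZMod m`. -/
noncomputable def famGcd (m : ℕ) [NeZero m] (X : Set (ZMod m)) : ℕ :=
  Nat.gcd m ((Set.toFinite X).toFinset.gcd ZMod.val)

section famGcd

variable {m : ℕ} [NeZero m] {X : Set (ZMod m)}

lemma famGcd_dvd_left : famGcd m X ∣ m :=
  Nat.gcd_dvd_left _ _

lemma famGcd_dvd_val {x : ZMod m} (hx : x ∈ X) : famGcd m X ∣ x.val :=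
  (Nat.gcd_dvd_right _ _).trans (Finset.gcd_dvd ((Set.toFinite X).mem_toFinset.2 hx))

lemma dvd_famGcd {k : ℕ} (hm : k ∣ m) (hX : ∀ x ∈ X, k ∣ x.val) : k ∣ famGcd m X :=
  Nat.dvd_gcd hm (Finset.dvd_gcd fun x hx => hX x ((Set.toFinite X).mem_toFinset.1 hx))

lemma famGcd_eq_one_of_closure_eq_top (h : AddSubgroup.closure X = ⊤) : famGcd m X = 1 := by
  let reduce := ZMod.castHom famGcd_dvd_left (ZMod (famGcd m X))
  have hX : AddSubgroup.closure X ≤ reduce.toAddMonoidHom.ker := by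
    refine AddSubgroup.closure_le _ |>.2 fun x hx => ?_
    change reduce x = 0
    rw [← ZMod.natCast_zmod_val x, map_natCast, ZMod.natCast_eq_zero_iff]
    exact famGcd_dvd_val hx
  have h1 : reduce 1 = 0 := hX (h ▸ AddSubgroup.mem_top 1)
  rwa [map_one, ZMod.one_eq_zero_iff] at h1

lemma closure_eq_top_of_famGcd_eq_one (h : famGcd m X = 1) : AddSubgroup.closure X = ⊤ := by
  set K := (AddSubgroup.closure X).comap (Int.castAddHom (ZMod m))
  obtain ⟨a, ha⟩ := Int.subgroup_cyclic K
  have hdvd : ∀ n : ℕ, ((n : ℤ) : ZMod m) ∈ AddSubgroup.closure X → a.natAbs ∣ n := by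
    intro n (hn : (n : ℤ) ∈ K)
    obtain ⟨k, hk⟩ := AddSubgroup.mem_closure_singleton.1 (ha ▸ hn)
    exact Int.natAbs_dvd_natAbs.2 (Dvd.intro_left k hk)
  have ha1 : a.natAbs ∣ famGcd m X := by
    refine dvd_famGcd (hdvd m (by simp)) fun x hx => hdvd _ ?_
    rw [Int.cast_natCast, ZMod.natCast_zmod_val]
    exact AddSubgroup.subset_closure hx
  have h1 : (1 : ℤ) ∈ K := by
    rw [ha]
    rcases Int.natAbs_eq_iff.1 (Nat.dvd_one.1 (h ▸ ha1)) with rfl | rfl <;> simp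
  refine (AddSubgroup.eq_top_iff' _).2 fun x => ?_
  obtain ⟨k, rfl⟩ := ZMod.intCast_surjective x
  exact show k ∈ K by simpa using K.zsmul_mem h1 k

lemma closure_eq_top_iff_famGcd_eq_one : AddSubgroup.closure X = ⊤ ↔ famGcd m X = 1 :=
  ⟨famGcd_eq_one_of_closure_eq_top, closure_eq_top_of_famGcd_eq_one⟩

end famGcd

namespace SimpleGraph

variable {V : Type*}

lemma reachable_fromRel_of_rel {r : V → V → Prop} {u v : V} (h : r u v) :
    (fromRel r).Reachable u v := by
  by_cases huv : u = v
  · exact huv ▸ Reachable.refl u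
  · exact Adj.reachable ((fromRel_adj r u v).2 ⟨huv, Or.inl h⟩)

lemma Reachable.apply_eq_of_forall_adj {G : SimpleGraph V} {α : Type*} {f : V → α}
    (hf : ∀ u v, G.Adj u v → f u = f v) {u v : V} (h : G.Reachable u v) : f u = f v := by
  obtain ⟨w⟩ := h
  induction w with
  | nil => rfl
  | cons hadj _ ih => exact (hf _ _ hadj).trans ih

end SimpleGraph

section bicirculant

open Sum

variable {m : ℕ} {R S T : Set (ZMod m)}

lemma bicirculant_reachable_inl_inr (h0S : 0 ∈ S) (i : ZMod m) :
    (bicirculant m R S T).Reachable (inl i) (inr i) :=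
  reachable_fromRel_of_rel ⟨0, h0S, (add_zero i).symm⟩

lemma bicirculant_reachable_inl_add (h0S : 0 ∈ S) {x : ZMod m} (hx : x ∈ R ∪ S ∪ T)
    (i : ZMod m) : (bicirculant m R S T).Reachable (inl i) (inl (i + x)) := by
  have hback := (bicirculant_reachable_inl_inr (R := R) (T := T) h0S (i + x)).symm
  rcases hx with (hR | hS) | hT
  · exact reachable_fromRel_of_rel ⟨x, hR, rfl⟩
  · exact (reachable_fromRel_of_rel ⟨x, hS, rfl⟩).trans hback
  · exact (bicirculant_reachable_inl_inr h0S i).trans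
      ((reachable_fromRel_of_rel ⟨x, hT, rfl⟩).trans hback)

lemma bicirculant_reachable_inl_add_of_mem_closure (h0S : 0 ∈ S) {x : ZMod m}
    (hx : x ∈ AddSubgroup.closure (R ∪ S ∪ T)) (i : ZMod m) :
    (bicirculant m R S T).Reachable (inl i) (inl (i + x)) := by
  induction hx using AddSubgroup.closure_induction generalizing i with
  | mem x hx => exact bicirculant_reachable_inl_add h0S hx i
  | zero => rw [add_zero]
  | add x y _ _ ihx ihy => exact (ihx i).trans (add_assoc i x y ▸ ihy (i + x))
  | neg x _ ih => simpa [← sub_eq_add_neg] using (ih (i - x)).symm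

lemma bicirculant_elim_mk_eq_of_adj {u v : ZMod m ⊕ ZMod m} (h : (bicirculant m R S T).Adj u v) :
    Sum.elim (↑) (↑) u = (Sum.elim (↑) (↑) v : ZMod m ⧸ AddSubgroup.closure (R ∪ S ∪ T)) := by
  have hmk : ∀ {i j : ZMod m}, j ∈ R ∪ S ∪ T →
      (i : ZMod m ⧸ AddSubgroup.closure (R ∪ S ∪ T)) = ↑(i + j) := fun hj =>
    QuotientAddGroup.eq.2 (by simpa using AddSubgroup.subset_closure hj)
  obtain ⟨-, h | h⟩ := (fromRel_adj _ u v).1 h <;>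
  rcases u with i | i <;> rcases v with i' | i' <;> obtain ⟨j, hj, rfl⟩ := h
  all_goals first
    | exact hmk (by simp [hj])
    | exact (hmk (by simp [hj])).symm

end bicirculant

theorem bicirculant_connected_iff_general (m : ℕ) [NeZero m] (R S T : Set (ZMod m))
    (h0S : (0 : ZMod m) ∈ S) :
    (bicirculant m R S T).Connected ↔ famGcd m (R ∪ S ∪ T) = 1 := by
  rw [connected_iff_exists_forall_reachable, ← closure_eq_top_iff_famGcd_eq_one]
  constructor
  · rintro ⟨v, hv⟩
    refine (AddSubgroup.eq_top_iff' _).2 fun a => ?_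
    have hcoset := ((hv (Sum.inl 0)).symm.trans (hv (Sum.inl a))).apply_eq_of_forall_adj
      fun _ _ => bicirculant_elim_mk_eq_of_adj
    exact (QuotientAddGroup.eq_zero_iff a).1 (by simpa using hcoset.symm)
  · intro h
    have hreach (a : ZMod m) : (bicirculant m R S T).Reachable (Sum.inl 0) (Sum.inl a) := by
      simpa using bicirculant_reachable_inl_add_of_mem_closure h0S (h ▸ AddSubgroup.mem_top a) 0
    refine ⟨Sum.inl 0, ?_⟩
    rintro (a | a)
    · exact hreach a
    · exact (hreach a).trans (bicirculant_reachable_inl_inr h0S a)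

/-- A bicirculant `B(m;R,S,T)` is connected iff `gcd(m, R, S, T) = 1`. -/
theorem bicirculant_connected_iff (m : ℕ) [NeZero m] (R S T : Set (ZMod m))
    (hR : R = -R) (hT : T = -T) (h0RT : (0 : ZMod m) ∉ R ∪ T) (h0S : (0 : ZMod m) ∈ S) :
    (bicirculant m R S T).Connected ↔ famGcd m (R ∪ S ∪ T) = 1 :=
  bicirculant_connected_iff_general m R S T h0S
end

section
/- Let m ≥ 3 and let a, b, c ∈ ZMod m be nonzero with 2a ≠ 0 and 2b ≠ 0. The generalized rose window graph R(m;a,b,c) is connected if and only if gcd(m, a, b, c) = 1, where the gcd is taken of m together with the canonical integer representatives of a, b, c. -/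
open SimpleGraph

/-- The generalized rose window graph `R(m;a,b,c) = B(m;{a,-a},{0,c},{b,-b})`. -/
def roseWindow (m : ℕ) (a b c : ZMod m) : SimpleGraph (ZMod m ⊕ ZMod m) :=
  bicirculant m {a, -a} {0, c} {b, -b}

/-- A generalized rose window graph `R(m;a,b,c)` is connected iff `gcd(m,a,b,c) = 1`. -/
theorem roseWindow_connected_iff (m : ℕ) [NeZero m] (hm : 3 ≤ m) (a b c : ZMod m)
    (ha : a ≠ 0) (hb : b ≠ 0) (hc : c ≠ 0)
    (ha2 : 2 * a ≠ 0) (hb2 : 2 * b ≠ 0) :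
    (roseWindow m a b c).Connected ↔
      Nat.gcd m (Nat.gcd a.val (Nat.gcd b.val c.val)) = 1 := by
  set G := roseWindow m a b c with hG
  set H := AddSubgroup.closure ({a, b, c} : Set (ZMod m)) with hH
  have haH : a ∈ H := AddSubgroup.subset_closure (by simp)
  have hbH : b ∈ H := AddSubgroup.subset_closure (by simp)
  have hcH : c ∈ H := AddSubgroup.subset_closure (by simp)
  -- basic adjacencies
  have hadjA : ∀ i : ZMod m, G.Adj (Sum.inl i) (Sum.inl (i + a)) := by
    intro i
    rw [hG, roseWindow, bicirculant, SimpleGraph.fromRel_adj]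
    refine ⟨?_, Or.inl ⟨a, Set.mem_insert _ _, rfl⟩⟩
    simp only [ne_eq, Sum.inl.injEq]
    intro h
    exact ha (left_eq_add.mp h)
  have hadjS : ∀ i : ZMod m, G.Adj (Sum.inl i) (Sum.inr i) := by
    intro i
    rw [hG, roseWindow, bicirculant, SimpleGraph.fromRel_adj]
    exact ⟨Sum.inl_ne_inr, Or.inl ⟨0, Set.mem_insert _ _, (add_zero i).symm⟩⟩
  have hadjB : ∀ i : ZMod m, G.Adj (Sum.inr i) (Sum.inr (i + b)) := by
    intro i
    rw [hG, roseWindow, bicirculant, SimpleGraph.fromRel_adj]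
    refine ⟨?_, Or.inl ⟨b, Set.mem_insert _ _, rfl⟩⟩
    simp only [ne_eq, Sum.inr.injEq]
    intro h
    exact hb (left_eq_add.mp h)
  have hadjC : ∀ i : ZMod m, G.Adj (Sum.inl i) (Sum.inr (i + c)) := by
    intro i
    rw [hG, roseWindow, bicirculant, SimpleGraph.fromRel_adj]
    exact ⟨Sum.inl_ne_inr, Or.inl ⟨c, Set.mem_insert_of_mem _ rfl, rfl⟩⟩
  -- elements of H give reachability on the left copy
  have hreach : ∀ x ∈ H, ∀ i : ZMod m,
      G.Reachable (Sum.inl i) (Sum.inl (i + x)) := by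
    intro x hx
    refine AddSubgroup.closure_induction
      (p := fun y _ => ∀ i : ZMod m, G.Reachable (Sum.inl i) (Sum.inl (i + y)))
      ?_ ?_ ?_ ?_ hx
    · intro y hy i
      rcases hy with rfl | rfl | rfl
      · exact (hadjA i).reachable
      · exact ((hadjS i).reachable.trans (hadjB i).reachable).trans
          (hadjS (i + y)).reachable.symm
      · exact (hadjC i).reachable.trans (hadjS (i + y)).reachable.symm
    · intro i; rw [add_zero]
    · intro y z _ _ py pz i
      have h := (py i).trans (pz (i + y))
      rwa [add_assoc] at h
    · intro y _ py i
      have h := py (i + -y)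
      rw [add_assoc, neg_add_cancel, add_zero] at h
      exact h.symm
  constructor
  · -- Connected → gcd = 1
    intro hcon
    -- the quotient map is constant on connected components
    have hnorm : H.Normal := inferInstance
    let f : ZMod m ⊕ ZMod m → ZMod m ⧸ H := fun v =>
      match v with
      | Sum.inl i => QuotientAddGroup.mk i
      | Sum.inr i => QuotientAddGroup.mk i
    have hmemmk : ∀ j ∈ H, ∀ i : ZMod m,
        (QuotientAddGroup.mk (i + j) : ZMod m ⧸ H) = QuotientAddGroup.mk i := by
      intro j hj i
      have h0 : (QuotientAddGroup.mk j : ZMod m ⧸ H) = 0 :=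
        (QuotientAddGroup.eq_zero_iff j).mpr hj
      calc (QuotientAddGroup.mk (i + j) : ZMod m ⧸ H)
          = QuotientAddGroup.mk i + QuotientAddGroup.mk j := rfl
        _ = QuotientAddGroup.mk i := by rw [h0, add_zero]
    have hstep : ∀ {u v : ZMod m ⊕ ZMod m}, G.Adj u v → f u = f v := by
      intro u v huv
      rw [hG, roseWindow, bicirculant, SimpleGraph.fromRel_adj] at huv
      obtain ⟨-, h⟩ := huv
      have key : ∀ (u' v' : ZMod m ⊕ ZMod m),
          (match u', v' with
            | Sum.inl i, Sum.inl i' => ∃ j ∈ ({a, -a} : Set (ZMod m)), i' = i + j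
            | Sum.inr i, Sum.inr i' => ∃ j ∈ ({b, -b} : Set (ZMod m)), i' = i + j
            | Sum.inl i, Sum.inr i' => ∃ j ∈ ({0, c} : Set (ZMod m)), i' = i + j
            | Sum.inr _, Sum.inl _ => False) → f u' = f v' := by
        rintro (i | i) (i' | i') h
        · obtain ⟨j, hj, rfl⟩ := h
          refine (hmemmk j ?_ i).symm
          rcases hj with rfl | rfl
          · exact haH
          · exact neg_mem haH
        · obtain ⟨j, hj, rfl⟩ := h
          refine (hmemmk j ?_ i).symm
          rcases hj with rfl | rfl
          · exact zero_mem H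
          · exact hcH
        · exact absurd h not_false
        · obtain ⟨j, hj, rfl⟩ := h
          refine (hmemmk j ?_ i).symm
          rcases hj with rfl | rfl
          · exact hbH
          · exact neg_mem hbH
      rcases h with h | h
      · exact key u v h
      · exact (key v u h).symm
    have hRconst : ∀ {u v : ZMod m ⊕ ZMod m}, G.Reachable u v → f u = f v := by
      intro u v hr
      obtain ⟨w⟩ := hr
      induction w with
      | nil => rfl
      | cons h p ih => exact (hstep h).trans ih
    have hfeq : f (Sum.inl 0) = f (Sum.inl 1) :=
      hRconst (hcon.preconnected (Sum.inl 0) (Sum.inl 1))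
    have h1H : (1 : ZMod m) ∈ H := by
      refine (QuotientAddGroup.eq_zero_iff (1 : ZMod m)).mp ?_
      have h0 : (QuotientAddGroup.mk (0 : ZMod m) : ZMod m ⧸ H) = 0 := rfl
      exact hfeq.symm.trans h0
    -- extract an integer combination
    obtain ⟨k, l, n, hk⟩ : ∃ k l n : ℤ,
        (1 : ZMod m) = (k : ZMod m) * a + (l : ZMod m) * b + (n : ZMod m) * c := by
      refine AddSubgroup.closure_induction
        (p := fun y _ => ∃ k l n : ℤ,
          y = (k : ZMod m) * a + (l : ZMod m) * b + (n : ZMod m) * c)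
        ?_ ?_ ?_ ?_ h1H
      · intro y hy
        rcases hy with rfl | rfl | rfl
        · exact ⟨1, 0, 0, by push_cast; ring⟩
        · exact ⟨0, 1, 0, by push_cast; ring⟩
        · exact ⟨0, 0, 1, by push_cast; ring⟩
      · exact ⟨0, 0, 0, by push_cast; ring⟩
      · rintro y z _ _ ⟨k1, l1, n1, rfl⟩ ⟨k2, l2, n2, rfl⟩
        exact ⟨k1 + k2, l1 + l2, n1 + n2, by push_cast; ring⟩
      · rintro y _ ⟨k, l, n, rfl⟩
        exact ⟨-k, -l, -n, by push_cast; ring⟩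
    have hz : ((k * (a.val : ℤ) + l * (b.val : ℤ) + n * (c.val : ℤ) - 1 : ℤ) : ZMod m)
        = 0 := by
      push_cast
      simp only [ZMod.natCast_val, ZMod.cast_id]
      linear_combination -hk
    have hdvd : (m : ℤ) ∣ (k * (a.val : ℤ) + l * (b.val : ℤ) + n * (c.val : ℤ) - 1) :=
      (ZMod.intCast_zmod_eq_zero_iff_dvd _ m).mp hz
    set d := Nat.gcd m (Nat.gcd a.val (Nat.gcd b.val c.val)) with hd
    have hdm : (d : ℤ) ∣ (m : ℤ) := Int.natCast_dvd_natCast.mpr (Nat.gcd_dvd_left _ _)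
    have hda : (d : ℤ) ∣ (a.val : ℤ) := Int.natCast_dvd_natCast.mpr
      ((Nat.gcd_dvd_right _ _).trans (Nat.gcd_dvd_left _ _))
    have hdb : (d : ℤ) ∣ (b.val : ℤ) := Int.natCast_dvd_natCast.mpr
      ((Nat.gcd_dvd_right _ _).trans ((Nat.gcd_dvd_right _ _).trans (Nat.gcd_dvd_left _ _)))
    have hdc : (d : ℤ) ∣ (c.val : ℤ) := Int.natCast_dvd_natCast.mpr
      ((Nat.gcd_dvd_right _ _).trans ((Nat.gcd_dvd_right _ _).trans (Nat.gcd_dvd_right _ _)))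
    have hcomb : (d : ℤ) ∣ (k * (a.val : ℤ) + l * (b.val : ℤ) + n * (c.val : ℤ)) :=
      dvd_add (dvd_add (hda.mul_left k) (hdb.mul_left l)) (hdc.mul_left n)
    have hd1 : (d : ℤ) ∣ 1 := by
      have := dvd_sub hcomb (hdm.trans hdvd)
      simpa using this
    exact Nat.dvd_one.mp (by exact_mod_cast hd1)
  · -- gcd = 1 → Connected
    intro hg
    -- Bezout to get 1 as a combination of a, b, c in ZMod m
    set A : ℤ := (a.val : ℤ) with hA
    set B : ℤ := (b.val : ℤ) with hB
    set C : ℤ := (c.val : ℤ) with hC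
    set M : ℤ := (m : ℤ) with hM
    have eb : ((Nat.gcd b.val c.val : ℕ) : ℤ) = B * Int.gcdA B C + C * Int.gcdB B C := by
      rw [← Int.gcd_natCast_natCast]; exact Int.gcd_eq_gcd_ab _ _
    have ea : ((Nat.gcd a.val (Nat.gcd b.val c.val) : ℕ) : ℤ)
        = A * Int.gcdA A ((Nat.gcd b.val c.val : ℕ) : ℤ)
          + ((Nat.gcd b.val c.val : ℕ) : ℤ) * Int.gcdB A ((Nat.gcd b.val c.val : ℕ) : ℤ) := by
      rw [← Int.gcd_natCast_natCast]
      convert Int.gcd_eq_gcd_ab A ((Nat.gcd b.val c.val : ℕ) : ℤ) using 3 <;>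
        rw [Int.gcd_natCast_natCast]
    have em : (1 : ℤ) = M * Int.gcdA M ((Nat.gcd a.val (Nat.gcd b.val c.val) : ℕ) : ℤ)
        + ((Nat.gcd a.val (Nat.gcd b.val c.val) : ℕ) : ℤ)
          * Int.gcdB M ((Nat.gcd a.val (Nat.gcd b.val c.val) : ℕ) : ℤ) := by
      have := Int.gcd_eq_gcd_ab M ((Nat.gcd a.val (Nat.gcd b.val c.val) : ℕ) : ℤ)
      rw [show Int.gcd M ((Nat.gcd a.val (Nat.gcd b.val c.val) : ℕ) : ℤ)
          = Nat.gcd m (Nat.gcd a.val (Nat.gcd b.val c.val)) from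
        Int.gcd_natCast_natCast _ _, hg] at this
      exact_mod_cast this
    set x := Int.gcdA A ((Nat.gcd b.val c.val : ℕ) : ℤ)
    set y := Int.gcdB A ((Nat.gcd b.val c.val : ℕ) : ℤ)
    set p := Int.gcdA B C
    set q := Int.gcdB B C
    set s := Int.gcdA M ((Nat.gcd a.val (Nat.gcd b.val c.val) : ℕ) : ℤ)
    set t := Int.gcdB M ((Nat.gcd a.val (Nat.gcd b.val c.val) : ℕ) : ℤ)
    have hZ : (1 : ℤ) = M * s + (A * x + (B * p + C * q) * y) * t := by
      rw [em, ea, eb]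
    have h1H : (1 : ZMod m) ∈ H := by
      have heq : (1 : ZMod m) = ((x * t : ℤ) : ZMod m) * a
          + ((p * y * t : ℤ) : ZMod m) * b + ((q * y * t : ℤ) : ZMod m) * c := by
        have h' : ((M * s + (A * x + (B * p + C * q) * y) * t : ℤ) : ZMod m) = 1 := by
          rw [← hZ]; norm_num
        rw [hA, hB, hC, hM] at h'
        push_cast at h'
        rw [← h']
        simp only [ZMod.natCast_val, ZMod.cast_id, ZMod.natCast_self, zero_mul, zero_add]
        push_cast
        ring
      have t1 : ((x * t : ℤ) : ZMod m) * a ∈ H := by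
        rw [← zsmul_eq_mul]; exact AddSubgroup.zsmul_mem H haH _
      have t2 : ((p * y * t : ℤ) : ZMod m) * b ∈ H := by
        rw [← zsmul_eq_mul]; exact AddSubgroup.zsmul_mem H hbH _
      have t3 : ((q * y * t : ℤ) : ZMod m) * c ∈ H := by
        rw [← zsmul_eq_mul]; exact AddSubgroup.zsmul_mem H hcH _
      rw [heq]
      exact add_mem (add_mem t1 t2) t3
    have hall : ∀ z : ZMod m, z ∈ H := by
      intro z
      have : z.val • (1 : ZMod m) ∈ H := AddSubgroup.nsmul_mem H h1H _
      simpa using this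
    have hLL : ∀ i j : ZMod m, G.Reachable (Sum.inl i) (Sum.inl j) := by
      intro i j
      have h := hreach (j - i) (hall _) i
      rw [show i + (j - i) = j by ring] at h
      exact h
    have : Nonempty (ZMod m ⊕ ZMod m) := ⟨Sum.inl 0⟩
    refine SimpleGraph.Connected.mk ?_
    rintro (i | i) (j | j)
    · exact hLL i j
    · exact (hLL i j).trans (hadjS j).reachable
    · exact (hadjS i).reachable.symm.trans (hLL i j)
    · exact ((hadjS i).reachable.symm.trans (hLL i j)).trans (hadjS j).reachable
end

section
/- Let m be a positive integer, let R, S, T ⊆ ZMod m satisfy R = −R, T = −T, 0 ∉ R ∪ T and 0 ∈ S, and let G = B(m;R,S,T). Suppose δ > 1, where δ is the gcd of m together with the canonical integer representatives of all elements of R ∪ S ∪ T. Then G has exactly δ connected components, and each connected component (as an induced subgraph of G) is isomorphic to the bicirculant B(m/δ; R/δ, S/δ, T/δ), where X/δ denotes the subset of ZMod (m/δ) obtained by dividing the canonical integer representative of each element of X by δ (each such representative is divisible by δ) and reducing modulo m/δ. -/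
open SimpleGraph

/-- `X/δ`: the subset of `ZMod (m/δ)` obtained by dividing the canonical integer
representative of each element of `X` by `δ` and reducing modulo `m/δ`. -/
def divSet (m δ : ℕ) (X : Set (ZMod m)) : Set (ZMod (m / δ)) :=
  (fun x : ZMod m => ((x.val / δ : ℕ) : ZMod (m / δ))) '' X

set_option linter.unusedSectionVars false
set_option linter.unusedVariables false

namespace BicircAux

/-- The defining relation of the bicirculant. -/
def brel (m : ℕ) (R S T : Set (ZMod m)) : (ZMod m ⊕ ZMod m) → (ZMod m ⊕ ZMod m) → Prop :=
  fun x y =>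
    match x, y with
    | Sum.inl i, Sum.inl i' => ∃ j ∈ R, i' = i + j
    | Sum.inr i, Sum.inr i' => ∃ j ∈ T, i' = i + j
    | Sum.inl i, Sum.inr i' => ∃ j ∈ S, i' = i + j
    | Sum.inr _, Sum.inl _ => False

lemma bic_adj (m : ℕ) (R S T : Set (ZMod m)) (x y : ZMod m ⊕ ZMod m) :
    (bicirculant m R S T).Adj x y ↔ x ≠ y ∧ (brel m R S T x y ∨ brel m R S T y x) :=
  SimpleGraph.fromRel_adj _ x y

/-- Embedding `ZMod (m/δ) → ZMod m`, multiplication by `δ`. -/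
def em (m δ : ℕ) (k : ZMod (m / δ)) : ZMod m := ((δ * k.val : ℕ) : ZMod m)

/-- "Division by δ" map `ZMod m → ZMod (m/δ)`. -/
def dd (m δ : ℕ) (y : ZMod m) : ZMod (m / δ) := ((y.val / δ : ℕ) : ZMod (m / δ))

/-- Reduction `ZMod m → ZMod δ`. -/
def pr (m δ : ℕ) (y : ZMod m) : ZMod δ := ((y.val : ℕ) : ZMod δ)

section Aux

variable (m δ : ℕ) [NeZero m]

lemma cast_mod (hd : δ ∣ m) (a : ℕ) : ((a % m : ℕ) : ZMod δ) = (a : ZMod δ) := by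
  conv_rhs => rw [show a = m * (a / m) + a % m from (Nat.div_add_mod a m).symm]
  obtain ⟨c, rfl⟩ := hd
  push_cast
  simp [ZMod.natCast_self]

lemma pr_add (hd : δ ∣ m) (x y : ZMod m) : pr m δ (x + y) = pr m δ x + pr m δ y := by
  unfold pr
  rw [ZMod.val_add, cast_mod m δ hd]
  push_cast
  ring

lemma pr_natCast (hd : δ ∣ m) (a : ℕ) : pr m δ ((a : ℕ) : ZMod m) = (a : ZMod δ) := by
  unfold pr
  rw [ZMod.val_natCast, cast_mod m δ hd]

lemma pr_eq_zero_iff (y : ZMod m) : pr m δ y = 0 ↔ δ ∣ y.val :=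
  ZMod.natCast_eq_zero_iff _ _

lemma pr_sub_eq_zero (hd : δ ∣ m) {x y : ZMod m} (h : pr m δ x = pr m δ y) :
    pr m δ (y - x) = 0 := by
  have h2 : pr m δ (y - x) + pr m δ x = pr m δ y := by
    rw [← pr_add m δ hd, sub_add_cancel]
  rw [h] at h2
  exact add_right_cancel (h2.trans (zero_add (pr m δ y)).symm)

variable [NeZero (m / δ)] in
lemma em_add (hd : δ ∣ m) (k k' : ZMod (m / δ)) :
    em m δ (k + k') = em m δ k + em m δ k' := by
  unfold em
  rw [ZMod.val_add]
  have key : ∀ a : ℕ, ((δ * (a % (m / δ)) : ℕ) : ZMod m) = ((δ * a : ℕ) : ZMod m) := by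
    intro a
    conv_rhs => rw [show a = (m / δ) * (a / (m / δ)) + a % (m / δ) from
      (Nat.div_add_mod a (m / δ)).symm]
    rw [Nat.mul_add, ← Nat.mul_assoc, Nat.mul_div_cancel' hd]
    push_cast
    simp [ZMod.natCast_self]
  rw [key]
  push_cast [Nat.mul_add]
  ring

variable [NeZero (m / δ)] in
lemma em_val (hd : δ ∣ m) (hδ0 : 0 < δ) (k : ZMod (m / δ)) : (em m δ k).val = δ * k.val := by
  apply ZMod.val_cast_of_lt
  calc δ * k.val < δ * (m / δ) := (Nat.mul_lt_mul_left hδ0).mpr (ZMod.val_lt k)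
    _ = m := Nat.mul_div_cancel' hd

variable [NeZero (m / δ)] in
lemma em_inj (hd : δ ∣ m) (hδ0 : 0 < δ) {k k' : ZMod (m / δ)}
    (h : em m δ k = em m δ k') : k = k' := by
  have hv : δ * k.val = δ * k'.val := by
    rw [← em_val m δ hd hδ0 k, ← em_val m δ hd hδ0 k', h]
  have hvv : k.val = k'.val := Nat.eq_of_mul_eq_mul_left hδ0 hv
  calc k = ((k.val : ℕ) : ZMod (m / δ)) := (ZMod.natCast_rightInverse k).symm
    _ = ((k'.val : ℕ) : ZMod (m / δ)) := by rw [hvv]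
    _ = k' := ZMod.natCast_rightInverse k'

variable [NeZero (m / δ)] in
lemma dd_em (hd : δ ∣ m) (hδ0 : 0 < δ) (k : ZMod (m / δ)) : dd m δ (em m δ k) = k := by
  unfold dd
  rw [em_val m δ hd hδ0, Nat.mul_div_cancel_left _ hδ0]
  exact ZMod.natCast_rightInverse k

variable [NeZero (m / δ)] in
lemma em_dd (hd : δ ∣ m) (hδ0 : 0 < δ) {y : ZMod m} (hy : δ ∣ y.val) :
    em m δ (dd m δ y) = y := by
  unfold em dd
  rw [ZMod.val_cast_of_lt (Nat.div_lt_div_of_lt_of_dvd hd (ZMod.val_lt y)),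
    Nat.mul_div_cancel' hy]
  exact ZMod.natCast_rightInverse y

variable [NeZero (m / δ)] in
lemma pr_em (hd : δ ∣ m) (k : ZMod (m / δ)) : pr m δ (em m δ k) = 0 := by
  rw [em, pr_natCast m δ hd]
  exact (ZMod.natCast_eq_zero_iff _ _).mpr ⟨k.val, rfl⟩

variable [NeZero (m / δ)] in
lemma mem_divSet_iff (hd : δ ∣ m) (hδ0 : 0 < δ) (X : Set (ZMod m))
    (hX : ∀ x ∈ X, δ ∣ x.val) (j' : ZMod (m / δ)) :
    j' ∈ divSet m δ X ↔ em m δ j' ∈ X := by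
  have hdiv : divSet m δ X = dd m δ '' X := rfl
  rw [hdiv]
  constructor
  · rintro ⟨x, hx, rfl⟩
    rwa [em_dd m δ hd hδ0 (hX x hx)]
  · intro h
    exact ⟨em m δ j', h, dd_em m δ hd hδ0 j'⟩

variable [NeZero (m / δ)] in
lemma shift_exists_iff (hd : δ ∣ m) (hδ0 : 0 < δ) (X : Set (ZMod m))
    (hX : ∀ x ∈ X, δ ∣ x.val) (a : ZMod m) (k k' : ZMod (m / δ)) :
    (∃ j ∈ X, a + em m δ k' = a + em m δ k + j) ↔ ∃ j' ∈ divSet m δ X, k' = k + j' := by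
  constructor
  · rintro ⟨j, hj, he⟩
    have he' : em m δ k' = em m δ k + j := by
      rwa [add_assoc, add_right_inj] at he
    have hj' : em m δ (k' - k) = j := by
      have h3 : em m δ (k + (k' - k)) = em m δ k + j := by rw [add_sub_cancel]; exact he'
      rw [em_add m δ hd] at h3
      exact add_left_cancel h3
    exact ⟨k' - k, (mem_divSet_iff m δ hd hδ0 X hX _).mpr (hj' ▸ hj), by ring⟩
  · rintro ⟨j', hj', rfl⟩
    refine ⟨em m δ j', (mem_divSet_iff m δ hd hδ0 X hX _).mp hj', ?_⟩
    rw [em_add m δ hd, add_assoc]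

end Aux

section Graph

variable {m : ℕ} {R S T : Set (ZMod m)}

lemma brel_ll {i i'} : brel m R S T (Sum.inl i) (Sum.inl i') ↔ ∃ j ∈ R, i' = i + j := Iff.rfl
lemma brel_rr {i i'} : brel m R S T (Sum.inr i) (Sum.inr i') ↔ ∃ j ∈ T, i' = i + j := Iff.rfl
lemma brel_lr {i i'} : brel m R S T (Sum.inl i) (Sum.inr i') ↔ ∃ j ∈ S, i' = i + j := Iff.rfl
lemma brel_rl {i i'} : brel m R S T (Sum.inr i) (Sum.inl i') ↔ False := Iff.rfl

lemma adj_shift (a : ZMod m) {x y} (h : (bicirculant m R S T).Adj x y) :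
    (bicirculant m R S T).Adj (Sum.map (· + a) (· + a) x) (Sum.map (· + a) (· + a) y) := by
  have hmove : ∀ (X : Set (ZMod m)) (i i' : ZMod m),
      (∃ j ∈ X, i' = i + j) → (∃ j ∈ X, i' + a = i + a + j) := by
    rintro X i i' ⟨j, hj, rfl⟩
    exact ⟨j, hj, by ring⟩
  rw [bic_adj] at h ⊢
  obtain ⟨hne, hrel⟩ := h
  rcases x with i | i <;> rcases y with i' | i' <;>
    simp only [Sum.map_inl, Sum.map_inr, brel_ll, brel_rr, brel_lr, brel_rl, ne_eq,
      Sum.inl.injEq, Sum.inr.injEq, add_left_inj, or_false, false_or,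
      reduceCtorEq, not_false_eq_true, true_and] at hne hrel ⊢ <;>
    first
      | exact ⟨hne, hrel.imp (hmove _ _ _) (hmove _ _ _)⟩
      | exact hrel.imp (hmove _ _ _) (hmove _ _ _)
      | exact hmove _ _ _ hrel
      | exact hrel

/-- Translation by `a` as a graph homomorphism. -/
def shiftHom (a : ZMod m) : bicirculant m R S T →g bicirculant m R S T where
  toFun := Sum.map (· + a) (· + a)
  map_rel' := adj_shift a

lemma reach_shift (a : ZMod m) {x y} (h : (bicirculant m R S T).Reachable x y) :
    (bicirculant m R S T).Reachable (Sum.map (· + a) (· + a) x) (Sum.map (· + a) (· + a) y) :=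
  h.map (shiftHom a)

lemma adj_lr (h0S : (0 : ZMod m) ∈ S) (i : ZMod m) :
    (bicirculant m R S T).Adj (Sum.inl i) (Sum.inr i) := by
  rw [bic_adj]
  exact ⟨by simp, Or.inl (brel_lr.mpr ⟨0, h0S, by ring⟩)⟩

lemma reach_gen (h0S : (0 : ZMod m) ∈ S) (h0RT : (0 : ZMod m) ∉ R ∪ T) :
    ∀ x ∈ R ∪ S ∪ T, (bicirculant m R S T).Reachable (Sum.inl 0) (Sum.inl x) := by
  rintro x ((hx | hx) | hx)
  · have hadj : (bicirculant m R S T).Adj (Sum.inl 0) (Sum.inl x) := by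
      rw [bic_adj]
      refine ⟨?_, Or.inl (brel_ll.mpr ⟨x, hx, by ring⟩)⟩
      simp only [ne_eq, Sum.inl.injEq]
      rintro rfl
      exact h0RT (Or.inl hx)
    exact hadj.reachable
  · have h1 : (bicirculant m R S T).Adj (Sum.inl 0) (Sum.inr x) := by
      rw [bic_adj]
      exact ⟨by simp, Or.inl (brel_lr.mpr ⟨x, hx, by ring⟩)⟩
    exact h1.reachable.trans (adj_lr h0S x).reachable.symm
  · have h2 : (bicirculant m R S T).Adj (Sum.inr 0) (Sum.inr x) := by
      rw [bic_adj]
      refine ⟨?_, Or.inl (brel_rr.mpr ⟨x, hx, by ring⟩)⟩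
      simp only [ne_eq, Sum.inr.injEq]
      rintro rfl
      exact h0RT (Or.inr hx)
    exact ((adj_lr h0S 0).reachable.trans h2.reachable).trans (adj_lr h0S x).reachable.symm

/-- The set of `x` with `u_0` reachable from `u_x`, as a subgroup. -/
def dsub (m : ℕ) (R S T : Set (ZMod m)) : AddSubgroup (ZMod m) where
  carrier := {x | (bicirculant m R S T).Reachable (Sum.inl 0) (Sum.inl x)}
  zero_mem' := SimpleGraph.Reachable.refl _
  add_mem' := by
    intro x y hx hy
    have h2 := reach_shift x hy
    simp only [Sum.map_inl, zero_add] at h2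
    have h3 := hx.trans h2
    show (bicirculant m R S T).Reachable (Sum.inl 0) (Sum.inl (x + y))
    rwa [add_comm x y]
  neg_mem' := by
    intro x hx
    have h2 := reach_shift (-x) hx.symm
    simp only [Sum.map_inl, zero_add, add_neg_cancel] at h2
    exact h2

variable [NeZero m]

lemma adj_pr (δ : ℕ) (hd : δ ∣ m) (hval : ∀ x ∈ R ∪ S ∪ T, δ ∣ x.val) {x y}
    (h : (bicirculant m R S T).Adj x y) :
    Sum.elim (pr m δ) (pr m δ) x = Sum.elim (pr m δ) (pr m δ) y := by
  have key : ∀ (i j : ZMod m), j ∈ R ∪ S ∪ T → pr m δ (i + j) = pr m δ i := by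
    intro i j hj
    rw [pr_add m δ hd, (pr_eq_zero_iff m δ j).mpr (hval j hj), add_zero]
  rw [bic_adj] at h
  obtain ⟨-, hrel⟩ := h
  rcases x with i | i <;> rcases y with i' | i' <;>
    rcases hrel with hr | hr <;>
    simp only [brel_ll, brel_rr, brel_lr, brel_rl] at hr <;>
    first
    | exact hr.elim
    | (obtain ⟨j, hj, rfl⟩ := hr
       simp only [Sum.elim_inl, Sum.elim_inr]
       first
        | exact (key _ _ (by simp [Set.mem_union, hj])).symm
        | exact key _ _ (by simp [Set.mem_union, hj]))

lemma ker_mem_dsub (δ : ℕ) (hd : δ ∣ m) (hδ0 : 0 < δ)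
    (hδmem : ((δ : ℕ) : ZMod m) ∈ dsub m R S T)
    {y : ZMod m} (hy : pr m δ y = 0) : y ∈ dsub m R S T := by
  have hdy : δ ∣ y.val := (pr_eq_zero_iff m δ y).mp hy
  have h1 : (y.val / δ) • ((δ : ℕ) : ZMod m) ∈ dsub m R S T :=
    AddSubgroup.nsmul_mem _ hδmem _
  have h2 : (y.val / δ) • ((δ : ℕ) : ZMod m) = y := by
    rw [nsmul_eq_mul, ← Nat.cast_mul, Nat.div_mul_cancel hdy, ZMod.natCast_val, ZMod.cast_id]
  rwa [h2] at h1

lemma reach_of_pr (δ : ℕ) (hd : δ ∣ m) (hδ0 : 0 < δ)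
    (hδmem : ((δ : ℕ) : ZMod m) ∈ dsub m R S T) (h0S : (0 : ZMod m) ∈ S)
    {x y : ZMod m ⊕ ZMod m}
    (h : Sum.elim (pr m δ) (pr m δ) x = Sum.elim (pr m δ) (pr m δ) y) :
    (bicirculant m R S T).Reachable x y := by
  have main : ∀ i i' : ZMod m, pr m δ i = pr m δ i' →
      (bicirculant m R S T).Reachable (Sum.inl i) (Sum.inl i') := by
    intro i i' hpr
    have h0 : pr m δ (i' - i) = 0 := pr_sub_eq_zero m δ hd hpr
    have hD : (i' - i) ∈ dsub m R S T := ker_mem_dsub δ hd hδ0 hδmem h0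
    have hreach : (bicirculant m R S T).Reachable (Sum.inl 0) (Sum.inl (i' - i)) := hD
    have h4 := reach_shift i hreach
    simp only [Sum.map_inl, zero_add, sub_add_cancel] at h4
    exact h4
  rcases x with i | i <;> rcases y with i' | i' <;> simp only [Sum.elim_inl, Sum.elim_inr] at h
  · exact main i i' h
  · exact (main i i' h).trans (adj_lr h0S i').reachable
  · exact (adj_lr h0S i).reachable.symm.trans (main i i' h)
  · exact ((adj_lr h0S i).reachable.symm.trans (main i i' h)).trans (adj_lr h0S i').reachable

lemma delta_mem_closure (δ : ℕ) (hδ : δ = famGcd m (R ∪ S ∪ T)) :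
    ((δ : ℕ) : ZMod m) ∈ AddSubgroup.closure (R ∪ S ∪ T) := by
  set H := AddSubgroup.closure (R ∪ S ∪ T) with hH
  set I := H.comap (Int.castAddHom (ZMod m)) with hI
  obtain ⟨g, hg⟩ := Int.subgroup_cyclic I
  have hgd : ∀ z : ℤ, z ∈ I ↔ g ∣ z := by
    intro z
    rw [hg, AddSubgroup.mem_closure_singleton]
    constructor
    · rintro ⟨n, rfl⟩
      exact ⟨n, by simp [zsmul_eq_mul, mul_comm]⟩
    · rintro ⟨c, rfl⟩
      exact ⟨c, by simp [zsmul_eq_mul, mul_comm]⟩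
  have hmI : ((m : ℤ)) ∈ I := by
    simp only [hI, AddSubgroup.mem_comap, Int.coe_castAddHom, Int.cast_natCast,
      ZMod.natCast_self]
    exact AddSubgroup.zero_mem H
  have hxI : ∀ x ∈ R ∪ S ∪ T, ((x.val : ℤ)) ∈ I := by
    intro x hx
    have hxx : ((x.val : ℕ) : ZMod m) = x := ZMod.natCast_rightInverse x
    simp only [hI, AddSubgroup.mem_comap, Int.coe_castAddHom, Int.cast_natCast, hxx]
    exact AddSubgroup.subset_closure hx
  have hgm : g.natAbs ∣ m := by
    have h1 := Int.natAbs_dvd_natAbs.mpr ((hgd _).mp hmI)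
    simpa only [Int.natAbs_natCast] using h1
  have hgv : ∀ x ∈ R ∪ S ∪ T, g.natAbs ∣ x.val := by
    intro x hx
    have h1 := Int.natAbs_dvd_natAbs.mpr ((hgd _).mp (hxI x hx))
    simpa only [Int.natAbs_natCast] using h1
  have hgδ : g.natAbs ∣ δ := by
    rw [hδ]
    unfold famGcd
    exact Nat.dvd_gcd hgm (Finset.dvd_gcd fun x hxF =>
      hgv x ((Set.Finite.mem_toFinset _).mp hxF))
  have hδI : ((δ : ℤ)) ∈ I :=
    (hgd _).mpr (Int.natAbs_dvd.mp (Int.natCast_dvd_natCast.mpr hgδ))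
  simp only [hI, AddSubgroup.mem_comap, Int.coe_castAddHom, Int.cast_natCast] at hδI
  exact hδI

end Graph

end BicircAux

/-- If `δ = gcd(m,R,S,T) > 1`, then `B(m;R,S,T)` has exactly `δ` connected
components, each isomorphic (as an induced subgraph) to `B(m/δ; R/δ, S/δ, T/δ)`. -/
theorem bicirculant_components (m : ℕ) [NeZero m] (R S T : Set (ZMod m))
    (hR : R = -R) (hT : T = -T) (h0RT : (0 : ZMod m) ∉ R ∪ T) (h0S : (0 : ZMod m) ∈ S)
    (δ : ℕ) (hδ : δ = famGcd m (R ∪ S ∪ T)) (hδ1 : 1 < δ) :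
    Nat.card (bicirculant m R S T).ConnectedComponent = δ ∧
    ∀ K : (bicirculant m R S T).ConnectedComponent,
      Nonempty ((bicirculant m R S T).induce K.supp ≃g
        bicirculant (m / δ) (divSet m δ R) (divSet m δ S) (divSet m δ T)) := by
  classical
  open BicircAux in
  have hδ0 : 0 < δ := by omega
  haveI : NeZero δ := ⟨by omega⟩
  have hd : δ ∣ m := by rw [hδ]; exact Nat.gcd_dvd_left _ _
  haveI : NeZero (m / δ) :=
    ⟨(Nat.div_pos (Nat.le_of_dvd (Nat.pos_of_ne_zero (NeZero.ne m)) hd) hδ0).ne'⟩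
  have hval : ∀ x ∈ R ∪ S ∪ T, δ ∣ x.val := by
    intro x hx
    rw [hδ]
    exact dvd_trans (Nat.gcd_dvd_right _ _)
      (Finset.gcd_dvd ((Set.Finite.mem_toFinset _).mpr hx))
  set G := bicirculant m R S T with hG
  set c : ZMod m ⊕ ZMod m → ZMod δ := Sum.elim (pr m δ) (pr m δ) with hc
  have hδmem : ((δ : ℕ) : ZMod m) ∈ dsub m R S T :=
    (AddSubgroup.closure_le (dsub m R S T)).mpr
      (fun x hx => reach_gen h0S h0RT x hx) (delta_mem_closure δ hδ)
  have hreach_pr : ∀ {x y}, G.Reachable x y → c x = c y := by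
    intro x y h
    obtain ⟨p⟩ := h
    induction p with
    | nil => rfl
    | cons ha _ ih => exact (adj_pr δ hd hval ha).trans ih
  have hpr_reach : ∀ {x y}, c x = c y → G.Reachable x y :=
    fun {x y} h => reach_of_pr δ hd hδ0 hδmem h0S h
  have hconst : ∀ (v w : ZMod m ⊕ ZMod m) (p : G.Walk v w), p.IsPath → c v = c w :=
    fun v w p _ => hreach_pr ⟨p⟩
  set f : G.ConnectedComponent → ZMod δ := ConnectedComponent.lift c hconst with hf
  have hbij : Function.Bijective f := by
    constructor
    · intro K K'
      refine ConnectedComponent.ind₂ (fun v w h => ?_) K K'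
      rw [hf, ConnectedComponent.lift_mk, ConnectedComponent.lift_mk] at h
      exact ConnectedComponent.eq.mpr (hpr_reach h)
    · intro z
      refine ⟨G.connectedComponentMk (Sum.inl ((z.val : ℕ) : ZMod m)), ?_⟩
      rw [hf, ConnectedComponent.lift_mk]
      show pr m δ ((z.val : ℕ) : ZMod m) = z
      rw [pr_natCast m δ hd]
      exact ZMod.natCast_rightInverse z
  have hvalR : ∀ x ∈ R, δ ∣ x.val := fun x hx => hval x (Or.inl (Or.inl hx))
  have hvalS : ∀ x ∈ S, δ ∣ x.val := fun x hx => hval x (Or.inl (Or.inr hx))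
  have hvalT : ∀ x ∈ T, δ ∣ x.val := fun x hx => hval x (Or.inr hx)
  constructor
  · rw [Nat.card_congr (Equiv.ofBijective f hbij), Nat.card_zmod]
  · intro K
    induction K using ConnectedComponent.ind with
    | _ w =>
    obtain ⟨a, ha⟩ : ∃ a : ZMod m, c w = pr m δ a := by
      rcases w with i | i
      exacts [⟨i, rfl⟩, ⟨i, rfl⟩]
    have hsupp : ∀ x, x ∈ (G.connectedComponentMk w).supp ↔ c x = pr m δ a := by
      intro x
      rw [ConnectedComponent.mem_supp_iff, ConnectedComponent.eq]
      constructor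
      · intro h
        rw [hreach_pr h, ha]
      · intro h
        exact hpr_reach (h.trans ha.symm)
    have hmeml : ∀ k : ZMod (m / δ),
        (Sum.inl (a + em m δ k) : ZMod m ⊕ ZMod m) ∈ (G.connectedComponentMk w).supp := by
      intro k
      rw [hsupp]
      show pr m δ (a + em m δ k) = pr m δ a
      rw [pr_add m δ hd, pr_em m δ hd, add_zero]
    have hmemr : ∀ k : ZMod (m / δ),
        (Sum.inr (a + em m δ k) : ZMod m ⊕ ZMod m) ∈ (G.connectedComponentMk w).supp := by
      intro k
      rw [hsupp]
      show pr m δ (a + em m δ k) = pr m δ a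
      rw [pr_add m δ hd, pr_em m δ hd, add_zero]
    have hsub : ∀ {i : ZMod m}, pr m δ i = pr m δ a → a + em m δ (dd m δ (i - a)) = i := by
      intro i hi
      rw [em_dd m δ hd hδ0 ((pr_eq_zero_iff m δ _).mp (pr_sub_eq_zero m δ hd hi.symm))]
      ring
    let e : (ZMod (m / δ) ⊕ ZMod (m / δ)) ≃ ((G.connectedComponentMk w).supp : Set _) :=
      { toFun := fun x => match x with
          | Sum.inl k => ⟨Sum.inl (a + em m δ k), hmeml k⟩
          | Sum.inr k => ⟨Sum.inr (a + em m δ k), hmemr k⟩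
        invFun := fun x => match x with
          | ⟨Sum.inl i, _⟩ => Sum.inl (dd m δ (i - a))
          | ⟨Sum.inr i, _⟩ => Sum.inr (dd m δ (i - a))
        left_inv := by
          rintro (k | k) <;>
            simp only [add_sub_cancel_left, dd_em m δ hd hδ0]
        right_inv := by
          rintro ⟨i | i, hi⟩ <;>
            · apply Subtype.ext
              have hpri : pr m δ i = pr m δ a := (hsupp _).mp hi
              simp only [hsub hpri] }
    have hadd_iff : ∀ k k' : ZMod (m / δ), a + em m δ k = a + em m δ k' ↔ k = k' := by
      intro k k'
      constructor
      · intro h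
        exact em_inj m δ hd hδ0 (add_left_cancel h)
      · rintro rfl
        rfl
    have hmapiff : ∀ x y : ZMod (m / δ) ⊕ ZMod (m / δ),
        (G.induce (G.connectedComponentMk w).supp).Adj (e x) (e y) ↔
        (bicirculant (m / δ) (divSet m δ R) (divSet m δ S) (divSet m δ T)).Adj x y := by
      intro x y
      rcases x with k | k <;> rcases y with k' | k'
      · show G.Adj (Sum.inl (a + em m δ k)) (Sum.inl (a + em m δ k')) ↔ _
        rw [hG, bic_adj, bic_adj]
        simp only [brel_ll, ne_eq, Sum.inl.injEq]
        exact and_congr (not_congr (hadd_iff k k'))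
          (or_congr (shift_exists_iff m δ hd hδ0 R hvalR a k k')
            (shift_exists_iff m δ hd hδ0 R hvalR a k' k))
      · show G.Adj (Sum.inl (a + em m δ k)) (Sum.inr (a + em m δ k')) ↔ _
        rw [hG, bic_adj, bic_adj]
        simp only [brel_lr, brel_rl, ne_eq, reduceCtorEq, not_false_eq_true, true_and,
          or_false]
        exact shift_exists_iff m δ hd hδ0 S hvalS a k k'
      · show G.Adj (Sum.inr (a + em m δ k)) (Sum.inl (a + em m δ k')) ↔ _
        rw [hG, bic_adj, bic_adj]
        simp only [brel_lr, brel_rl, ne_eq, reduceCtorEq, not_false_eq_true, true_and,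
          false_or]
        exact shift_exists_iff m δ hd hδ0 S hvalS a k' k
      · show G.Adj (Sum.inr (a + em m δ k)) (Sum.inr (a + em m δ k')) ↔ _
        rw [hG, bic_adj, bic_adj]
        simp only [brel_rr, ne_eq, Sum.inr.injEq]
        exact and_congr (not_congr (hadd_iff k k'))
          (or_congr (shift_exists_iff m δ hd hδ0 T hvalT a k k')
            (shift_exists_iff m δ hd hδ0 T hvalT a k' k))
    exact ⟨SimpleGraph.Iso.symm { toEquiv := e, map_rel_iff' := fun {x y} => hmapiff x y }⟩
end

section
/- Let m ≥ 3 and let a, b ∈ ZMod m be nonzero with 2a ≠ 0 and 2b ≠ 0, and suppose a = b or a = −b in ZMod m. If the I-graph G = I(m;a,b) is connected, then G is Hamiltonian and, moreover, G contains a Hamilton path whose endpoints are the inner vertices v_0 and v_a (a path visiting every vertex of G exactly once). -/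
/-!
When `a = ±b`, the I-graph `I(m;a,b)` is `I(m;a,a)`. Every edge changes the coordinate in
`ZMod m` by an element of `⟨a⟩`, so connectivity forces `a` to generate `ZMod m`, i.e. to have
order `m`. The sequence
`v_0, u_0, u_a, u_{2a}, …, u_{(m-1)a}, v_{(m-1)a}, v_{(m-2)a}, …, v_a`
then lists every vertex exactly once along edges of the graph, and the inner edge `v_a v_0`
closes it into a Hamiltonian cycle.
-/

open SimpleGraph

/-- The I-graph `I(m;a,b) = B(m;{a,-a},{0},{b,-b})`. -/
def Igraph (m : ℕ) (a b : ZMod m) : SimpleGraph (ZMod m ⊕ ZMod m) :=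
  bicirculant m {a, -a} {0} {b, -b}

theorem ZMod.one_lt_of_ne_zero {m : ℕ} [NeZero m] {a : ZMod m} (ha : a ≠ 0) : 1 < m := by
  have := NeZero.ne m
  have : m ≠ 1 := by
    rintro rfl
    exact ha (Subsingleton.elim a 0)
  omega

namespace SimpleGraph

variable {V : Type*} {G : SimpleGraph V}

theorem exists_isHamiltonian_walk_of_isChain [DecidableEq V] {l : List V}
    (hchain : l.IsChain G.Adj) (hnodup : l.Nodup) (hmem : ∀ v, v ∈ l) {u v : V}
    (hu : l.head? = some u) (hv : l.getLast? = some v) :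
    ∃ p : G.Walk u v, p.IsHamiltonian := by
  have hne : l ≠ [] := by rintro rfl; simp at hu
  obtain rfl : l.head hne = u := by simpa [List.head?_eq_some_head hne] using hu
  obtain rfl : l.getLast hne = v := by simpa [List.getLast?_eq_some_getLast hne] using hv
  refine ⟨Walk.ofSupport l hne hchain, Walk.IsPath.isHamiltonian_of_mem ?_ ?_⟩
  · exact Walk.IsPath.mk' (by rwa [Walk.support_ofSupport])
  · simpa [Walk.support_ofSupport] using hmem

theorem isHamiltonian_of_isHamiltonian_walk_of_adj [Fintype V] [DecidableEq V] {u v : V}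
    {p : G.Walk v u} (hp : p.IsHamiltonian) (h : G.Adj u v) (hlen : 2 ≤ p.length) :
    G.IsHamiltonian := by
  refine fun _ ↦ ⟨u, .cons h p, ?_⟩
  refine Walk.isHamiltonianCycle_isCycle_and_isHamiltonian_tail.mpr ⟨?_, ?_⟩
  · exact Walk.isCycle_iff_isPath_tail_and_le_length.mpr
      ⟨by simpa using hp.isPath, by rw [Walk.length_cons]; omega⟩
  · exact fun w ↦ by simpa [Walk.tail_cons] using hp w

end SimpleGraph

section Bicirculant

variable {m : ℕ} {R S T : Set (ZMod m)} {H : AddSubgroup (ZMod m)}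

theorem bicirculant_adj_sub_mem (hR : R ⊆ H) (hS : S ⊆ H) (hT : T ⊆ H)
    {x y : ZMod m ⊕ ZMod m} (hxy : (bicirculant m R S T).Adj x y) :
    Sum.elim id id y - Sum.elim id id x ∈ H := by
  have hdiff : ∀ x y : ZMod m ⊕ ZMod m, (bicirculant m R S T).Adj x y →
      Sum.elim id id y - Sum.elim id id x ∈ H ∨ Sum.elim id id x - Sum.elim id id y ∈ H := by
    rintro (i | i) (j | j) ⟨-, ⟨k, hk, rfl⟩ | ⟨k, hk, rfl⟩⟩ <;> simp_all [Set.subset_def]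
  obtain h | h := hdiff x y hxy
  · exact h
  · simpa using H.neg_mem h

theorem bicirculant_walk_sub_mem (hR : R ⊆ H) (hS : S ⊆ H) (hT : T ⊆ H)
    {x y : ZMod m ⊕ ZMod m} (w : (bicirculant m R S T).Walk x y) :
    Sum.elim id id y - Sum.elim id id x ∈ H := by
  induction w with
  | nil => simp
  | cons hadj _ ih =>
    simpa using H.add_mem ih (bicirculant_adj_sub_mem hR hS hT hadj)

theorem eq_top_of_bicirculant_connected (hR : R ⊆ H) (hS : S ⊆ H) (hT : T ⊆ H)
    (hconn : (bicirculant m R S T).Connected) : H = ⊤ :=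
  (AddSubgroup.eq_top_iff' H).mpr fun x ↦ by
    simpa using bicirculant_walk_sub_mem hR hS hT (hconn (.inl 0) (.inl x)).some

end Bicirculant

section Igraph

variable {m : ℕ} {a b : ZMod m}

theorem Igraph_neg_right : Igraph m a (-b) = Igraph m a b := by
  simp only [Igraph, neg_neg, Set.pair_comm]

theorem Igraph_adj_inl (ha : a ≠ 0) (i : ZMod m) : (Igraph m a b).Adj (.inl i) (.inl (i + a)) :=
  (fromRel_adj ..).mpr ⟨by simpa using ha, .inl ⟨a, by simp, rfl⟩⟩

theorem Igraph_adj_inl_inr (i : ZMod m) : (Igraph m a b).Adj (.inl i) (.inr i) :=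
  (fromRel_adj ..).mpr ⟨by simp, .inl ⟨0, rfl, (add_zero i).symm⟩⟩

theorem Igraph_adj_inr (hb : b ≠ 0) (i : ZMod m) : (Igraph m a b).Adj (.inr i) (.inr (i + b)) :=
  (fromRel_adj ..).mpr ⟨by simpa using hb, .inl ⟨b, by simp, rfl⟩⟩

theorem forall_mem_zmultiples_of_Igraph_connected (hconn : (Igraph m a a).Connected) (x : ZMod m) :
    x ∈ AddSubgroup.zmultiples a := by
  have hpm : ({a, -a} : Set (ZMod m)) ⊆ AddSubgroup.zmultiples a := by
    simp [Set.insert_subset_iff, AddSubgroup.mem_zmultiples]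
  rw [eq_top_of_bicirculant_connected hpm (by simp) hpm hconn]
  trivial

end Igraph

section Hook

variable {m : ℕ} {a : ZMod m}

def hookSupport (m : ℕ) (a : ZMod m) : List (ZMod m ⊕ ZMod m) :=
  .inr 0 :: (((List.range m).map fun k ↦ .inl (k • a)) ++
    (List.range (m - 1)).reverse.map fun k ↦ .inr ((k + 1) • a))

theorem isChain_hookSupport [NeZero m] (ha : a ≠ 0) :
    (hookSupport m a).IsChain (Igraph m a a).Adj := by
  have hm := NeZero.ne m
  rw [hookSupport, List.isChain_cons, List.isChain_append, List.isChain_map, List.isChain_map,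
    List.isChain_reverse, List.isChain_range, List.isChain_range]
  refine ⟨?_, ?_, ?_, ?_⟩
  · simpa [List.head?_range, hm] using (Igraph_adj_inl_inr 0).symm
  · intro k _
    rw [Nat.succ_eq_add_one, succ_nsmul]
    exact Igraph_adj_inl ha _
  · intro k _
    rw [Nat.succ_eq_add_one, succ_nsmul _ (k + 1)]
    exact (Igraph_adj_inr ha _).symm
  · simp only [List.getLast?_map, List.getLast?_range, List.map_reverse, List.head?_reverse, hm,
      ↓reduceIte, Option.map_some, Option.mem_def, Option.some.injEq, Option.map_eq_some_iff,
      Option.ite_none_left_eq_some, forall_eq']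
    rintro _ ⟨_, ⟨hm1, rfl⟩, rfl⟩
    rw [show m - 1 - 1 + 1 = m - 1 by omega]
    exact Igraph_adj_inl_inr _

theorem nodup_hookSupport (h : addOrderOf a = m) : (hookSupport m a).Nodup := by
  have hinj : Set.InjOn (fun k : ℕ ↦ k • a) (Set.Iio m) := by
    simpa only [h] using nsmul_injOn_Iio_addOrderOf (x := a)
  rw [hookSupport, List.nodup_cons, List.nodup_append]
  refine ⟨?_, ?_, ?_, ?_⟩
  · simp only [List.mem_append, List.mem_map, List.mem_reverse, List.mem_range, reduceCtorEq,
      and_false, exists_false, false_or, Sum.inr.injEq, not_exists, not_and]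
    intro k hk hk0
    exact k.succ_ne_zero (hinj (by omega : k + 1 < m) (by omega : 0 < m) (by simpa using hk0))
  · refine List.nodup_range.map_on fun k hk l hl hkl ↦ ?_
    exact hinj (List.mem_range.mp hk) (List.mem_range.mp hl) (Sum.inl.inj hkl)
  · rw [List.map_reverse, List.nodup_reverse]
    refine List.nodup_range.map_on fun k hk l hl hkl ↦ ?_
    rw [List.mem_range] at hk hl
    exact Nat.succ_injective (hinj (by omega : k + 1 < m) (by omega : l + 1 < m) (Sum.inr.inj hkl))
  · simp

theorem mem_hookSupport [NeZero m] (hgen : ∀ x, x ∈ AddSubgroup.zmultiples a)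
    (v : ZMod m ⊕ ZMod m) : v ∈ hookSupport m a := by
  have hord : addOrderOf a = m := by simpa using addOrderOf_eq_card_of_forall_mem_zmultiples hgen
  have hrange (x : ZMod m) : ∃ k < m, k • a = x := by
    simpa [hord] using mem_zmultiples_iff_mem_range_addOrderOf.mp (hgen x)
  rcases v with x | x <;> obtain ⟨k, hk, rfl⟩ := hrange x
  · refine List.mem_cons_of_mem _ (List.mem_append_left _ (List.mem_map.mpr ⟨k, ?_, rfl⟩))
    exact List.mem_range.mpr hk
  · rcases k with _ | k
    · simp [hookSupport]
    · refine List.mem_cons_of_mem _ (List.mem_append_right _ (List.mem_map.mpr ⟨k, ?_, rfl⟩))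
      rw [List.mem_reverse, List.mem_range]
      omega

theorem getLast?_hookSupport (hm : 1 < m) : (hookSupport m a).getLast? = some (.inr a) := by
  simp only [hookSupport, List.getLast?_cons, List.getLast?_append, List.getLast?_map,
    List.getLast?_reverse, List.head?_range, if_neg (by omega : m - 1 ≠ 0)]
  simp

end Hook

theorem exists_isHamiltonian_walk_Igraph {m : ℕ} [NeZero m] {a : ZMod m} (ha : a ≠ 0)
    (hgen : ∀ x, x ∈ AddSubgroup.zmultiples a) :
    ∃ p : (Igraph m a a).Walk (.inr 0) (.inr a), p.IsHamiltonian := by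
  have hord : addOrderOf a = m := by simpa using addOrderOf_eq_card_of_forall_mem_zmultiples hgen
  exact exists_isHamiltonian_walk_of_isChain (isChain_hookSupport ha) (nodup_hookSupport hord)
    (mem_hookSupport hgen) rfl (getLast?_hookSupport (ZMod.one_lt_of_ne_zero ha))

theorem Igraph_eq_params_two_hooked_general (m : ℕ) [NeZero m] (a b : ZMod m)
    (ha : a ≠ 0) (hab : a = b ∨ a = -b) (hconn : (Igraph m a b).Connected) :
    (Igraph m a b).IsHamiltonian ∧
      ∃ p : (Igraph m a b).Walk (Sum.inr 0) (Sum.inr a), p.IsHamiltonian := by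
  have hG : Igraph m a b = Igraph m a a := by
    obtain rfl | rfl := hab
    · rfl
    · exact Igraph_neg_right.symm
  rw [hG] at hconn ⊢
  obtain ⟨p, hp⟩ :=
    exists_isHamiltonian_walk_Igraph ha (forall_mem_zmultiples_of_Igraph_connected hconn)
  have hlen : 2 ≤ p.length := by
    have := ZMod.one_lt_of_ne_zero ha
    rw [hp.length_eq, Fintype.card_sum, ZMod.card]
    omega
  exact ⟨isHamiltonian_of_isHamiltonian_walk_of_adj hp (by simpa using (Igraph_adj_inr ha 0).symm)
    hlen, p, hp⟩

/-- A connected I-graph `I(m;a,b)` with `a = ±b` is hamiltonian and contains a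
Hamilton path between the inner vertices `v_0` and `v_a`. -/
theorem Igraph_eq_params_two_hooked (m : ℕ) [NeZero m] (hm : 3 ≤ m) (a b : ZMod m)
    (ha : a ≠ 0) (hb : b ≠ 0) (ha2 : 2 * a ≠ 0) (hb2 : 2 * b ≠ 0)
    (hab : a = b ∨ a = -b) (hconn : (Igraph m a b).Connected) :
    (Igraph m a b).IsHamiltonian ∧
      ∃ p : (Igraph m a b).Walk (Sum.inr 0) (Sum.inr a), p.IsHamiltonian :=
  Igraph_eq_params_two_hooked_general m a b ha hab hconn
end

section
/- Let m be a positive integer having at most three distinct prime divisors, and let S be a finite set of integers with 0 ∈ S, |S| ≥ 4, and gcd(m, gcd of all elements of S) = 1 (i.e., the gcd of m together with all elements of S is 1). Then there exist pairwise distinct elements c_i, c_j, c_k ∈ S such that gcd(m, c_i − c_k, c_j − c_k) = 1. -/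
private lemma ctrans {q a b c : ℤ} (h1 : q ∣ a - b) (h2 : q ∣ b - c) : q ∣ a - c := by
  have := dvd_add h1 h2
  simpa using this

private lemma csymm {q a b : ℤ} (h : q ∣ a - b) : q ∣ b - a := by
  have := h.neg_right
  simpa using this

private lemma key' (q1 q2 q3 : ℤ) (S : Finset ℤ) (hS : 3 ≤ S.card)
    (h1 : ∃ a ∈ S, ∃ b ∈ S, ¬ q1 ∣ a - b)
    (h2 : ∃ a ∈ S, ∃ b ∈ S, ¬ q2 ∣ a - b)
    (h3 : ∃ a ∈ S, ∃ b ∈ S, ¬ q3 ∣ a - b)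
    (H : ∀ x ∈ S, ∀ y ∈ S, ∀ z ∈ S, x ≠ y → x ≠ z → y ≠ z →
      (q1 ∣ x - z ∧ q1 ∣ y - z) ∨ (q2 ∣ x - z ∧ q2 ∣ y - z) ∨
      (q3 ∣ x - z ∧ q3 ∣ y - z)) : False := by
  obtain ⟨a, ha, b, hb, hab1⟩ := h1
  have hab : a ≠ b := fun h => hab1 (by simp [h])
  have hex : ∃ e ∈ S, e ≠ a ∧ e ≠ b := by
    by_contra h
    push_neg at h
    have hsub : S ⊆ {a, b} := by
      intro e he
      rcases eq_or_ne e a with h' | h'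
      · simp [h']
      · simp [h e he h']
    have := Finset.card_le_card hsub
    have h2' : ({a, b} : Finset ℤ).card ≤ 2 :=
      le_trans (Finset.card_insert_le _ _) (by simp)
    omega
  have c2ab : q2 ∣ a - b := by
    by_contra hc
    have hall : ∀ e ∈ S, e ≠ a → e ≠ b → q3 ∣ a - e ∧ q3 ∣ b - e := by
      intro e he hea heb
      rcases H a ha b hb e he hab (Ne.symm hea) (Ne.symm heb) with h | h | h
      · exact absurd (ctrans h.1 (csymm h.2)) hab1
      · exact absurd (ctrans h.1 (csymm h.2)) hc
      · exact h
    obtain ⟨e, he, hea, heb⟩ := hex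
    obtain ⟨hae, hbe⟩ := hall e he hea heb
    have h3ab : q3 ∣ a - b := ctrans hae (csymm hbe)
    have hallS : ∀ u ∈ S, q3 ∣ a - u := by
      intro u hu
      rcases eq_or_ne u a with rfl | hua
      · simp
      rcases eq_or_ne u b with rfl | hub
      · exact h3ab
      · exact (hall u hu hua hub).1
    obtain ⟨u1, hu1, u2, hu2, h3u⟩ := h3
    exact h3u (ctrans (csymm (hallS u1 hu1)) (hallS u2 hu2))
  have c3ab : q3 ∣ a - b := by
    by_contra hc
    have hall : ∀ e ∈ S, e ≠ a → e ≠ b → q2 ∣ a - e ∧ q2 ∣ b - e := by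
      intro e he hea heb
      rcases H a ha b hb e he hab (Ne.symm hea) (Ne.symm heb) with h | h | h
      · exact absurd (ctrans h.1 (csymm h.2)) hab1
      · exact h
      · exact absurd (ctrans h.1 (csymm h.2)) hc
    obtain ⟨e, he, hea, heb⟩ := hex
    obtain ⟨hae, hbe⟩ := hall e he hea heb
    have h2ab : q2 ∣ a - b := ctrans hae (csymm hbe)
    have hallS : ∀ u ∈ S, q2 ∣ a - u := by
      intro u hu
      rcases eq_or_ne u a with rfl | hua
      · simp
      rcases eq_or_ne u b with rfl | hub
      · exact h2ab
      · exact (hall u hu hua hub).1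
    obtain ⟨u1, hu1, u2, hu2, h2u⟩ := h2
    exact h2u (ctrans (csymm (hallS u1 hu1)) (hallS u2 hu2))
  have hsplit : ∀ e ∈ S, q2 ∣ a - e ∨ q3 ∣ a - e := by
    intro e he
    rcases eq_or_ne e a with rfl | hea
    · left; simp
    rcases eq_or_ne e b with rfl | heb
    · left; exact c2ab
    rcases H a ha b hb e he hab (Ne.symm hea) (Ne.symm heb) with h | h | h
    · exact absurd (ctrans h.1 (csymm h.2)) hab1
    · exact Or.inl h.1
    · exact Or.inr h.1
  obtain ⟨u, hu, hu2⟩ : ∃ u ∈ S, ¬ q2 ∣ a - u := by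
    obtain ⟨u1, hu1, u2', hu2', h2u⟩ := h2
    by_contra h
    push_neg at h
    exact h2u (ctrans (csymm (h u1 hu1)) (h u2' hu2'))
  have hu3 : q3 ∣ a - u := (hsplit u hu).resolve_left hu2
  obtain ⟨v, hv, hv3⟩ : ∃ v ∈ S, ¬ q3 ∣ a - v := by
    obtain ⟨u1, hu1, u2', hu2', h3u⟩ := h3
    by_contra h
    push_neg at h
    exact h3u (ctrans (csymm (h u1 hu1)) (h u2' hu2'))
  have hv2 : q2 ∣ a - v := (hsplit v hv).resolve_right hv3
  have hua : u ≠ a := fun h => hu2 (by simp [h])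
  have hub : u ≠ b := fun h => hu2 (by rw [h]; exact c2ab)
  have hva : v ≠ a := fun h => hv3 (by simp [h])
  have hvb : v ≠ b := fun h => hv3 (by rw [h]; exact c3ab)
  have huv : u ≠ v := fun h => hu2 (by rw [h]; exact hv2)
  have h1' : q1 ∣ u - a ∧ q1 ∣ v - a := by
    rcases H u hu v hv a ha huv hua hva with h | h | h
    · exact h
    · exact absurd (csymm h.1) hu2
    · exact absurd (csymm h.2) hv3
  rcases H u hu v hv b hb huv hub hvb with h | h | h
  · exact hab1 (ctrans (csymm h1'.1) h.1)
  · exact hu2 (ctrans c2ab (csymm h.1))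
  · exact hv3 (ctrans c3ab (csymm h.2))

private lemma key (q1 q2 q3 : ℤ) (S : Finset ℤ) (hS : 3 ≤ S.card)
    (h1 : ∃ a ∈ S, ∃ b ∈ S, ¬ q1 ∣ a - b)
    (h2 : ∃ a ∈ S, ∃ b ∈ S, ¬ q2 ∣ a - b)
    (h3 : ∃ a ∈ S, ∃ b ∈ S, ¬ q3 ∣ a - b) :
    ∃ x ∈ S, ∃ y ∈ S, ∃ z ∈ S, x ≠ y ∧ x ≠ z ∧ y ≠ z ∧
      ¬ (q1 ∣ x - z ∧ q1 ∣ y - z) ∧ ¬ (q2 ∣ x - z ∧ q2 ∣ y - z) ∧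
      ¬ (q3 ∣ x - z ∧ q3 ∣ y - z) := by
  by_contra hcon
  apply key' q1 q2 q3 S hS h1 h2 h3
  intro x hx y hy z hz hxy hxz hyz
  by_contra h'
  exact hcon ⟨x, hx, y, hy, z, hz, hxy, hxz, hyz, fun hA => h' (Or.inl hA),
    fun hB => h' (Or.inr (Or.inl hB)), fun hC => h' (Or.inr (Or.inr hC))⟩

/-- If `m` has at most three distinct prime divisors and `S` is a finite set of
integers containing `0` with `|S| ≥ 4` and `gcd(m, S) = 1`, then there are three
pairwise distinct elements `cᵢ, cⱼ, cₖ ∈ S` with `gcd(m, cᵢ - cₖ, cⱼ - cₖ) = 1`. -/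
theorem exists_coprime_differences (m : ℕ) (hm : 0 < m)
    (hprimes : m.primeFactors.card ≤ 3)
    (S : Finset ℤ) (h0S : (0 : ℤ) ∈ S) (hS : 4 ≤ S.card)
    (hgcd : Finset.gcd (insert (m : ℤ) S) id = 1) :
    ∃ ci ∈ S, ∃ cj ∈ S, ∃ ck ∈ S, ci ≠ cj ∧ ci ≠ ck ∧ cj ≠ ck ∧
      Finset.gcd {(m : ℤ), ci - ck, cj - ck} id = 1 := by
  classical
  -- two distinct elements of S
  obtain ⟨a0, ha0, b0, hb0, hab0⟩ : ∃ a ∈ S, ∃ b ∈ S, a ≠ b := by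
    have h1 : 1 < S.card := by omega
    obtain ⟨a, ha, b, hb, hab⟩ := Finset.one_lt_card.mp h1
    exact ⟨a, ha, b, hb, hab⟩
  -- a big prime not dividing a0 - b0
  obtain ⟨p0, hp0big, hp0prime⟩ := Nat.exists_infinite_primes ((a0 - b0).natAbs + 1)
  have hp0nd : ¬ ((p0 : ℤ)) ∣ a0 - b0 := by
    intro h
    have hd : p0 ∣ (a0 - b0).natAbs := by
      have := Int.natAbs_dvd_natAbs.mpr h
      simpa using this
    have hne : (a0 - b0).natAbs ≠ 0 := by
      simp only [ne_eq, Int.natAbs_eq_zero, sub_eq_zero]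
      exact hab0
    have := Nat.le_of_dvd (Nat.pos_of_ne_zero hne) hd
    omega
  set l := m.primeFactors.toList with hl
  have hlen : l.length ≤ 3 := by
    rw [hl, Finset.length_toList]; exact hprimes
  -- non-constancy for each candidate divisor
  have hnc : ∀ i : ℕ, ∃ x ∈ S, ∃ y ∈ S, ¬ ((l.getD i p0 : ℤ)) ∣ x - y := by
    intro i
    by_cases hi : i < l.length
    · have hmem : l.getD i p0 ∈ m.primeFactors := by
        rw [List.getD_eq_getElem l p0 hi]
        have h' : l[i] ∈ l := List.getElem_mem hi
        exact Finset.mem_toList.mp h'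
      set p := l.getD i p0 with hp
      have hpp : p.Prime := Nat.prime_of_mem_primeFactors hmem
      have hpm : p ∣ m := Nat.dvd_of_mem_primeFactors hmem
      have hex : ∃ s ∈ S, ¬ (p : ℤ) ∣ s := by
        by_contra h
        push_neg at h
        have hdg : (p : ℤ) ∣ Finset.gcd (insert (m : ℤ) S) id := by
          apply Finset.dvd_gcd
          intro x hx
          rcases Finset.mem_insert.mp hx with rfl | hxS
          · show (p : ℤ) ∣ (m : ℤ)
            exact_mod_cast hpm
          · exact h x hxS
        rw [hgcd] at hdg
        have hp1 : p ∣ 1 := by exact_mod_cast hdg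
        exact hpp.ne_one (Nat.dvd_one.mp hp1)
      obtain ⟨s, hs, hps⟩ := hex
      exact ⟨s, hs, 0, h0S, by simpa using hps⟩
    · have : l.getD i p0 = p0 := List.getD_eq_default l p0 (le_of_not_gt hi)
      rw [this]
      exact ⟨a0, ha0, b0, hb0, hp0nd⟩
  obtain ⟨x, hx, y, hy, z, hz, hxy, hxz, hyz, hm1, hm2, hm3⟩ :=
    key ((l.getD 0 p0 : ℤ)) ((l.getD 1 p0 : ℤ)) ((l.getD 2 p0 : ℤ)) S (by omega)
      (hnc 0) (hnc 1) (hnc 2)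
  refine ⟨x, hx, y, hy, z, hz, hxy, hxz, hyz, ?_⟩
  set g := Finset.gcd ({(m : ℤ), x - z, y - z} : Finset ℤ) id with hg
  have hgm : g ∣ (m : ℤ) := Finset.gcd_dvd (by simp)
  have hgx : g ∣ x - z := Finset.gcd_dvd (by simp)
  have hgy : g ∣ y - z := Finset.gcd_dvd (by simp)
  have hgabs : g.natAbs = 1 := by
    by_contra hne
    have hg0 : g ≠ 0 := by
      intro h0
      rw [h0] at hgm
      have : (m : ℤ) = 0 := zero_dvd_iff.mp hgm
      have : m = 0 := by exact_mod_cast this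
      omega
    have h2 : 2 ≤ g.natAbs := by
      have : g.natAbs ≠ 0 := Int.natAbs_ne_zero.mpr hg0
      omega
    set p := g.natAbs.minFac with hp
    have hpp : p.Prime := Nat.minFac_prime (by omega)
    have hpg : (p : ℤ) ∣ g :=
      (Int.natCast_dvd_natCast.mpr (Nat.minFac_dvd g.natAbs)).trans
        (Int.natAbs_dvd.mpr dvd_rfl)
    have hpm : p ∣ m := by
      have : (p : ℤ) ∣ (m : ℤ) := hpg.trans hgm
      exact_mod_cast this
    have hpP : p ∈ m.primeFactors := Nat.mem_primeFactors.mpr ⟨hpp, hpm, by omega⟩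
    have hpl : p ∈ l := by rw [hl, Finset.mem_toList]; exact hpP
    obtain ⟨j, hj, hjp⟩ := List.mem_iff_getElem.mp hpl
    have hjget : l.getD j p0 = p := by rw [List.getD_eq_getElem l p0 hj]; exact hjp
    have hpx : (p : ℤ) ∣ x - z := hpg.trans hgx
    have hpy : (p : ℤ) ∣ y - z := hpg.trans hgy
    have hj3 : j < 3 := lt_of_lt_of_le hj hlen
    interval_cases j
    · exact hm1 (by rw [hjget]; exact ⟨hpx, hpy⟩)
    · exact hm2 (by rw [hjget]; exact ⟨hpx, hpy⟩)
    · exact hm3 (by rw [hjget]; exact ⟨hpx, hpy⟩)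
  rcases Int.natAbs_eq_iff.mp hgabs with h | h
  · exact_mod_cast h
  · exfalso
    have hpos : 0 ≤ g := Int.nonneg_of_normalize_eq_self Finset.normalize_gcd
    rw [h] at hpos
    omega
end

section
/- Let m be a positive integer having at most three distinct prime divisors, let a and b be integers, and let S be a finite set of integers with 0 ∈ S, |S| ≥ 3, and the gcd of m, a, b together with all elements of S equal to 1. Then at least one of the following holds: (i) there exist distinct c, c' ∈ S with gcd(m, a, c − c', b) = 1; (ii) there exist pairwise distinct c, c', c'' ∈ S with gcd(m, c − c'', c' − c'') = 1. -/
/-!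
Only the primes of `m` matter. Let `P` be those dividing both `a` and `b`; by the gcd hypothesis
each `p ∈ P` misses some `s_p ∈ S`. If some nonzero `x ∈ S` has no prime divisor in `P`, the pair
`(x, 0)` gives (i). Otherwise every nonzero element of `S` has a prime divisor in `P`, which forces
`|P| ∈ {2, 3}`. If `P = {p, q}`, then `s_p` is divisible by `q` alone and `(s_p, s_q)` gives (i).
If `|P| = 3`, then `P` contains every prime of `m`: a nonzero `x ∈ S` divisible by exactly one
`k ∈ P` gives (ii) with `(x, s_k, 0)`; otherwise each `s_p` is divisible by exactly the two other
primes, and `(s_p, s_q, s_r)` gives (ii).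
-/

namespace Finset

variable {α : Type*} [CommRing α] {P S : Finset α}

theorem one_lt_card_of_forall_exists_dvd (hx : ∃ x ∈ S, x ≠ 0)
    (hwit : ∀ p ∈ P, ∃ s ∈ S, ¬ p ∣ s) (hcov : ∀ x ∈ S, x ≠ 0 → ∃ p ∈ P, p ∣ x) :
    1 < #P := by
  obtain ⟨x, hxS, hx0⟩ := hx
  obtain ⟨p, hp, -⟩ := hcov x hxS hx0
  obtain ⟨s, hsS, hps⟩ := hwit p hp
  obtain ⟨q, hq, hqs⟩ := hcov s hsS (by rintro rfl; exact hps (dvd_zero p))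
  exact one_lt_card.2 ⟨p, hp, q, hq, by rintro rfl; exact hps hqs⟩

theorem exists_mem_forall_dvd_iff_ne [DecidableEq α] [DecidableRel ((· ∣ ·) : α → α → Prop)]
    {n : ℕ} (hP : #P ≤ n + 1) (hwit : ∀ p ∈ P, ∃ s ∈ S, ¬ p ∣ s)
    (hcov : ∀ x ∈ S, x ≠ 0 → n ≤ #(P.filter (· ∣ x))) {t : α} (ht : t ∈ P) :
    ∃ s ∈ S, ∀ u ∈ P, u ∣ s ↔ u ≠ t := by
  obtain ⟨s, hsS, hts⟩ := hwit t ht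
  have hsub : P.filter (· ∣ s) ⊆ P.erase t := fun v hv => by
    obtain ⟨hvP, hvs⟩ := mem_filter.1 hv
    exact mem_erase.2 ⟨fun hvt => hts (hvt ▸ hvs), hvP⟩
  have hcard := hcov s hsS (by rintro rfl; exact hts (dvd_zero t))
  have heq := eq_of_subset_of_card_le hsub (by rw [card_erase_of_mem ht]; omega)
  exact ⟨s, hsS, fun u hu => by simpa [hu] using congrArg (u ∈ ·) heq⟩

theorem exists_sub_not_dvd_of_card_eq_two (hP : #P = 2) (hwit : ∀ p ∈ P, ∃ s ∈ S, ¬ p ∣ s)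
    (hcov : ∀ x ∈ S, x ≠ 0 → ∃ p ∈ P, p ∣ x) :
    ∃ c ∈ S, ∃ c' ∈ S, c ≠ c' ∧ ∀ p ∈ P, ¬ p ∣ c - c' := by
  classical
  have hcov₁ : ∀ x ∈ S, x ≠ 0 → 1 ≤ #(P.filter (· ∣ x)) := fun x hx hx0 =>
    card_pos.2 (filter_nonempty_iff.2 (hcov x hx hx0))
  obtain ⟨p, q, hpq, rfl⟩ := card_eq_two.1 hP
  obtain ⟨sp, hsp, hp⟩ := exists_mem_forall_dvd_iff_ne hP.le hwit hcov₁ (t := p) (by simp)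
  obtain ⟨sq, hsq, hq⟩ := exists_mem_forall_dvd_iff_ne hP.le hwit hcov₁ (t := q) (by simp)
  simp only [forall_mem_insert, mem_singleton, forall_eq, ne_eq, not_true_eq_false, iff_false,
    hpq, Ne.symm hpq, not_false_eq_true, iff_true] at hp hq ⊢
  refine ⟨sp, hsp, sq, hsq, by rintro rfl; exact hp.1 hq.1, ?_, ?_⟩
  · exact (dvd_sub_left hq.1).not.2 hp.1
  · exact (dvd_sub_right hp.2).not.2 hq.2

theorem exists_sub_and_sub_not_dvd_of_forall_dvd_iff_eq (h0 : 0 ∈ S) {x k s : α} (hxS : x ∈ S)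
    (hx0 : x ≠ 0) (hkP : k ∈ P) (hdvd : ∀ u ∈ P, u ∣ x ↔ u = k) (hsS : s ∈ S) (hks : ¬ k ∣ s) :
    ∃ c ∈ S, ∃ c' ∈ S, ∃ c'' ∈ S, c ≠ c' ∧ c ≠ c'' ∧ c' ≠ c'' ∧
      ∀ p ∈ P, ¬ (p ∣ c - c'' ∧ p ∣ c' - c'') := by
  refine ⟨x, hxS, s, hsS, 0, h0, ?_, hx0, ?_, fun u hu ⟨hux, hus⟩ => ?_⟩
  · rintro rfl; exact hks ((hdvd k hkP).2 rfl)
  · rintro rfl; exact hks (dvd_zero k)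
  · rw [sub_zero, hdvd u hu] at hux
    subst hux
    exact hks (by simpa using hus)

theorem exists_sub_and_sub_not_dvd_of_card_eq_three (hP : #P = 3) (h0 : 0 ∈ S)
    (hwit : ∀ p ∈ P, ∃ s ∈ S, ¬ p ∣ s) (hcov : ∀ x ∈ S, x ≠ 0 → ∃ p ∈ P, p ∣ x) :
    ∃ c ∈ S, ∃ c' ∈ S, ∃ c'' ∈ S, c ≠ c' ∧ c ≠ c'' ∧ c' ≠ c'' ∧
      ∀ p ∈ P, ¬ (p ∣ c - c'' ∧ p ∣ c' - c'') := by
  classical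
  by_cases hone : ∃ x ∈ S, x ≠ 0 ∧ #(P.filter (· ∣ x)) ≤ 1
  · obtain ⟨x, hxS, hx0, hx1⟩ := hone
    obtain ⟨k, hk⟩ := card_eq_one.1 <| le_antisymm hx1 <|
      card_pos.2 (filter_nonempty_iff.2 (hcov x hxS hx0))
    have hkP : k ∈ P := (mem_filter.1 (hk ▸ mem_singleton_self k)).1
    obtain ⟨s, hsS, hks⟩ := hwit k hkP
    exact exists_sub_and_sub_not_dvd_of_forall_dvd_iff_eq h0 hxS hx0 hkP
      (fun u hu => by simpa [hu] using congrArg (u ∈ ·) hk) hsS hks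
  push Not at hone
  obtain ⟨p, q, r, hpq, hpr, hqr, rfl⟩ := card_eq_three.1 hP
  obtain ⟨sp, hsp, hp⟩ := exists_mem_forall_dvd_iff_ne hP.le hwit hone (t := p) (by simp)
  obtain ⟨sq, hsq, hq⟩ := exists_mem_forall_dvd_iff_ne hP.le hwit hone (t := q) (by simp)
  obtain ⟨sr, hsr, hr⟩ := exists_mem_forall_dvd_iff_ne hP.le hwit hone (t := r) (by simp)
  simp only [forall_mem_insert, mem_singleton, forall_eq, ne_eq, not_true_eq_false, iff_false,
    hpq, hpr, hqr, Ne.symm hpq, Ne.symm hpr, Ne.symm hqr, not_false_eq_true, iff_true] at hp hq hr ⊢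
  refine ⟨sp, hsp, sq, hsq, sr, hsr, by rintro rfl; exact hp.1 hq.1,
    by rintro rfl; exact hp.1 hr.1, by rintro rfl; exact hq.2.1 hr.2.1, ?_, ?_, ?_⟩
  · exact fun h => hp.1 ((dvd_sub_left hr.1).1 h.1)
  · exact fun h => hq.2.1 ((dvd_sub_left hr.2.1).1 h.2)
  · exact fun h => hr.2.2 ((dvd_sub_right hp.2.2).1 h.1)

theorem exists_sub_not_dvd_or_exists_sub_and_sub_not_dvd {Q : Finset α} (hQ : #Q ≤ 3)
    (hPQ : P ⊆ Q) (h0 : 0 ∈ S) (hx : ∃ x ∈ S, x ≠ 0) (hwit : ∀ p ∈ P, ∃ s ∈ S, ¬ p ∣ s) :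
    (∃ c ∈ S, ∃ c' ∈ S, c ≠ c' ∧ ∀ p ∈ P, ¬ p ∣ c - c') ∨
    (∃ c ∈ S, ∃ c' ∈ S, ∃ c'' ∈ S, c ≠ c' ∧ c ≠ c'' ∧ c' ≠ c'' ∧
      ∀ p ∈ Q, ¬ (p ∣ c - c'' ∧ p ∣ c' - c'')) := by
  by_cases hfree : ∃ x ∈ S, x ≠ 0 ∧ ∀ p ∈ P, ¬ p ∣ x
  · obtain ⟨x, hxS, hx0, hx⟩ := hfree
    exact Or.inl ⟨x, hxS, 0, h0, hx0, by simpa using hx⟩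
  push Not at hfree
  have hP := one_lt_card_of_forall_exists_dvd hx hwit hfree
  rcases (show #P = 2 ∨ #P = 3 by have := card_le_card hPQ; omega) with hP2 | hP3
  · exact Or.inl (exists_sub_not_dvd_of_card_eq_two hP2 hwit hfree)
  · obtain rfl : P = Q := eq_of_subset_of_card_le hPQ (by omega)
    exact Or.inr (exists_sub_and_sub_not_dvd_of_card_eq_three hP3 h0 hwit hfree)

end Finset

theorem Int.gcd_insert_natCast_eq_one_iff {m : ℕ} (hm : m ≠ 0) (T : Finset ℤ) :
    (insert (m : ℤ) T).gcd id = 1 ↔ ∀ p ∈ m.primeFactors, ¬ ∀ x ∈ T, (p : ℤ) ∣ x := by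
  have hg : 0 ≤ (insert (m : ℤ) T).gcd id := Int.nonneg_of_normalize_eq_self Finset.normalize_gcd
  rw [← Int.natAbs_of_nonneg hg, Nat.cast_eq_one, Nat.eq_one_iff_not_exists_prime_dvd]
  simp only [← Int.natCast_dvd, Finset.dvd_gcd_iff, Finset.forall_mem_insert, id,
    Int.natCast_dvd_natCast, Nat.mem_primeFactors, ne_eq, hm, not_false_eq_true, and_true]
  grind

/-- If `m` has at most three distinct prime divisors, `a, b` are integers and `S` is
a finite set of integers containing `0` with `|S| ≥ 3` and `gcd(m, a, b, S) = 1`,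
then either there are distinct `c, c' ∈ S` with `gcd(m, a, c - c', b) = 1`, or there
are pairwise distinct `c, c', c'' ∈ S` with `gcd(m, c - c'', c' - c'') = 1`. -/
theorem exists_connected_spanning_subgraph_parameters (m : ℕ) (hm : 0 < m)
    (hprimes : m.primeFactors.card ≤ 3) (a b : ℤ)
    (S : Finset ℤ) (h0S : (0 : ℤ) ∈ S) (hS : 3 ≤ S.card)
    (hgcd : Finset.gcd (insert (m : ℤ) (insert a (insert b S))) id = 1) :
    (∃ c ∈ S, ∃ c' ∈ S, c ≠ c' ∧
      Finset.gcd {(m : ℤ), a, c - c', b} id = 1) ∨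
    (∃ c ∈ S, ∃ c' ∈ S, ∃ c'' ∈ S, c ≠ c' ∧ c ≠ c'' ∧ c' ≠ c'' ∧
      Finset.gcd {(m : ℤ), c - c'', c' - c''} id = 1) := by
  simp only [Int.gcd_insert_natCast_eq_one_iff hm.ne', Finset.forall_mem_insert,
    Finset.mem_singleton, forall_eq] at hgcd ⊢
  set Q : Finset ℤ := m.primeFactors.image (↑)
  set P : Finset ℤ := Q.filter (fun p => p ∣ a ∧ p ∣ b)
  have hwit : ∀ p ∈ P, ∃ s ∈ S, ¬ p ∣ s := by
    simpa only [P, Q, Finset.mem_filter, and_imp, Finset.forall_mem_image, not_and, not_forall,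
      exists_prop] using hgcd
  rcases Finset.exists_sub_not_dvd_or_exists_sub_and_sub_not_dvd
      (Finset.card_image_le.trans hprimes) (Finset.filter_subset _ Q) h0S
      (Finset.exists_mem_ne (by omega) 0) hwit with
    ⟨c, hc, c', hc', hne, h⟩ | ⟨c, hc, c', hc', c'', hc'', h₁, h₂, h₃, h⟩
  · simp only [Q, Finset.mem_filter, and_imp, Finset.forall_mem_image] at h
    exact Or.inl ⟨c, hc, c', hc', hne, fun p hp ⟨ha, hd, hb⟩ => h hp ha hb hd⟩
  · exact Or.inr ⟨c, hc, c', hc', c'', hc'', h₁, h₂, h₃,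
      by simpa only [Q, Finset.forall_mem_image] using h⟩
end
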